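/- arXiv:1108.0440 — 2 statements merged into one kernel-verified Lean document; each statement's English description precedes it below -/
import Mathlib

section
/- Let $N \geq 2$ and define $\mathcal{W} = \lfloor w(N) \log N / \log\log N \rfloor$ and $\mathcal{T} = w(N)^{-1/2} \log\log N$, where $w$ is a positive increasing function with $w(N) \to \infty$ and $w(N)/\log\log N \to 0$ as $N \to \infty$. Then for any fixed constants $\mu, \gamma > 0$, the quantity $x_N = \log N + \mathcal{T}(\gamma\mathcal{W} + 1 + \mu e^{\gamma\mathcal{T}}) + 2\mathcal{W}(\log(\mathcal{T}\mu e^{\gamma\mathcal{T}}) + 1) - (2\mathcal{W}+1)\log(2\mathcal{W}) - \tfrac{1}{2}\log(4\pi\mathcal{W})$ satisfies $x_N \to -\infty$ as $N \to \infty$; in fact $x_N \sim -2 w(N) \log N$. -/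
/-!
Write `L = log N`, `ℓ = log L` and `a = w L / ℓ`, so that `𝒲 ~ a`. As `log w` and `log ℓ` are
`o(ℓ)`, `log 𝒲 ~ log a = log w + ℓ - log ℓ ~ ℓ`, so the Stirling term `-2 𝒲 log 𝒲` is asymptotic
to `-2 a ℓ = -2 w L`. All other terms are `o(w L)`: `𝒯` and `log 𝒯` are `o(ℓ)`, so the terms
carrying a factor `𝒲` are `𝒲 · o(ℓ)`; `𝒯 e^{γ𝒯} = o(L)` because its logarithm is `o(log L)`;
`L = o(w L)` since `w → ∞`; and the remaining `log 𝒲` terms are `o(𝒲)`.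
-/

open Real Filter Asymptotics Topology

theorem Asymptotics.isEquivalent_int_floor {R : Type*} [NormedField R] [LinearOrder R]
    [IsStrictOrderedRing R] [OrderTopology R] [FloorRing R] :
    (fun x : R => (⌊x⌋ : R)) ~[atTop] fun x => x :=
  isEquivalent_nat_floor.congr_left <| (eventually_ge_atTop 0).mono fun _ hx =>
    natCast_floor_eq_intCast_floor hx

section

variable {α : Type*} {l : Filter α}

theorem isLittleO_log_const_mul {u : α → ℝ} (hu : Tendsto u l atTop)
    {c : ℝ} (hc : 0 < c) : (fun n => log (c * u n)) =o[l] u :=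
  (isLittleO_log_id_atTop.comp_tendsto (hu.const_mul_atTop hc)).trans_isBigO
    (isBigO_const_mul_self c u l)

theorem isLittleO_of_log_isLittleO_log {u v : α → ℝ}
    (hv : Tendsto (fun n => log (v n)) l atTop) (hu0 : ∀ᶠ n in l, 0 < u n)
    (hv0 : ∀ᶠ n in l, 0 < v n) (h : (fun n => log (u n)) =o[l] fun n => log (v n)) :
    u =o[l] v := by
  have hdiff : Tendsto (fun n => log (u n) - log (v n)) l atBot := by
    refine (tendsto_neg_atTop_atBot.comp
      ((IsEquivalent.refl.sub_isLittleO h).symm.tendsto_atTop hv)).congr fun n => ?_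
    simp
  refine isLittleO_of_tendsto' (hv0.mono fun n hn h0 => absurd h0 hn.ne') ?_
  refine (tendsto_exp_atBot.comp hdiff).congr' ?_
  filter_upwards [hu0, hv0] with n hun hvn
  simp [exp_sub, exp_log hun, exp_log hvn]

theorem isLittleO_mul_left_of_tendsto_atTop {f g : α → ℝ} (hg : Tendsto g l atTop) :
    f =o[l] fun n => g n * f n := by
  simpa using ((isLittleO_one_left_iff ℝ).mpr (tendsto_norm_atTop_atTop.comp hg)).mul_isBigO
    (isBigO_refl f l)

variable {L w : α → ℝ}

theorem tendsto_mul_div_log_atTop (hL : Tendsto L l atTop) (hw : Tendsto w l atTop) :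
    Tendsto (fun n => w n * L n / log (L n)) l atTop := by
  refine tendsto_atTop_mono' l ?_ hw
  filter_upwards [hL.eventually_gt_atTop 1, hw.eventually_ge_atTop 0] with n hL1 hw0
  rw [le_div_iff₀ (log_pos hL1)]
  exact mul_le_mul_of_nonneg_left (log_le_self (by linarith)) hw0

theorem isLittleO_div_sqrt_self {f : α → ℝ} (hw : Tendsto w l atTop) :
    (fun n => f n / √(w n)) =o[l] f := by
  have hsqrt : Tendsto (fun n => (√(w n))⁻¹) l (𝓝 0) :=
    (tendsto_sqrt_atTop.comp hw).inv_tendsto_atTop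
  simpa [div_eq_inv_mul] using (isLittleO_one_iff ℝ).mpr hsqrt |>.mul_isBigO (isBigO_refl f l)

theorem isEquivalent_log_mul_div_log (hL : Tendsto L l atTop) (hw : Tendsto w l atTop)
    (hwℓ : w =o[l] fun n => log (L n)) :
    (fun n => log (w n * L n / log (L n))) ~[l] fun n => log (L n) := by
  have hℓ : Tendsto (fun n => log (L n)) l atTop := tendsto_log_atTop.comp hL
  have hlogw : (fun n => log (w n)) =o[l] fun n => log (L n) :=
    (isLittleO_log_id_atTop.comp_tendsto hw).trans hwℓ
  have hlogℓ : (fun n => log (log (L n))) =o[l] fun n => log (L n) :=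
    isLittleO_log_id_atTop.comp_tendsto hℓ
  refine ((hlogw.sub hlogℓ).add_isEquivalent IsEquivalent.refl).congr_left ?_
  filter_upwards [hℓ.eventually_gt_atTop 0, hL.eventually_gt_atTop 0,
    hw.eventually_gt_atTop 0] with n hℓ hL0 hw0
  simp only [Pi.add_apply]
  rw [log_div (mul_pos hw0 hL0).ne' hℓ.ne', log_mul hw0.ne' hL0.ne']
  ring

theorem Asymptotics.IsEquivalent.mul_log_self {W : α → ℝ} (hL : Tendsto L l atTop)
    (hw : Tendsto w l atTop) (hwℓ : w =o[l] fun n => Real.log (L n))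
    (hW : W ~[l] fun n => w n * L n / Real.log (L n)) :
    (fun n => W n * Real.log (W n)) ~[l] fun n => w n * L n := by
  refine (hW.mul ((hW.log (tendsto_mul_div_log_atTop hL hw)).trans
    (isEquivalent_log_mul_div_log hL hw hwℓ))).congr_right ?_
  filter_upwards [(tendsto_log_atTop.comp hL).eventually_gt_atTop 0] with n hℓ
  exact div_mul_cancel₀ _ hℓ.ne'

theorem isLittleO_log_div_sqrt (hL : Tendsto L l atTop) (hw : Tendsto w l atTop)
    (hwℓ : w =o[l] fun n => log (L n)) :
    (fun n => log (log (L n) / √(w n))) =o[l] fun n => log (L n) := by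
  have hℓ : Tendsto (fun n => log (L n)) l atTop := tendsto_log_atTop.comp hL
  have hlogw : (fun n => log (w n)) =o[l] fun n => log (L n) :=
    (isLittleO_log_id_atTop.comp_tendsto hw).trans hwℓ
  have hlogℓ : (fun n => log (log (L n))) =o[l] fun n => log (L n) :=
    isLittleO_log_id_atTop.comp_tendsto hℓ
  refine (hlogℓ.sub (hlogw.const_mul_left (1 / 2))).congr' ?_ EventuallyEq.rfl
  filter_upwards [hℓ.eventually_gt_atTop 0, hw.eventually_gt_atTop 0] with n hℓ hw0
  rw [log_div hℓ.ne' (sqrt_pos.2 hw0).ne', log_sqrt hw0.le]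
  ring

/-- The exponent minus its Stirling term `-2 W log W`, after expanding `log (T μ e^{γT})` and
`(2W + 1) log (2W) = 2W log 2 + 2W log W + log (2W)`. -/
theorem isLittleO_stirling_remainder {W T : α → ℝ} (γ μ : ℝ) (hL : Tendsto L l atTop)
    (hw : Tendsto w l atTop) (hW : W ~[l] fun n => w n * L n / log (L n))
    (hT0 : ∀ᶠ n in l, 0 < T n) (hT : T =o[l] fun n => log (L n))
    (hlogT : (fun n => log (T n)) =o[l] fun n => log (L n)) :
    (fun n => L n + T n + μ * (T n * exp (γ * T n)) +
      (3 * γ * T n + 2 * log (T n) + 2 * (log μ + 1 - log 2)) * W n -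
      log (2 * W n) - (1 / 2) * log (4 * π * W n)) =o[l] fun n => w n * L n := by
  have hℓ : Tendsto (fun n => log (L n)) l atTop := tendsto_log_atTop.comp hL
  have hWtop : Tendsto W l atTop := hW.symm.tendsto_atTop (tendsto_mul_div_log_atTop hL hw)
  have hLf : L =o[l] fun n => w n * L n := isLittleO_mul_left_of_tendsto_atTop hw
  have hℓa : (fun n => log (L n) * (w n * L n / log (L n))) =ᶠ[l] fun n => w n * L n := by
    filter_upwards [hℓ.eventually_gt_atTop 0] with n hn
    exact mul_div_cancel₀ _ hn.ne'
  have haf : (fun n => w n * L n / log (L n)) =o[l] fun n => w n * L n :=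
    (isLittleO_mul_left_of_tendsto_atTop hℓ).congr' EventuallyEq.rfl hℓa
  have hexp : (fun n => T n * exp (γ * T n)) =o[l] L := by
    refine isLittleO_of_log_isLittleO_log hℓ (hT0.mono fun n hn => by positivity)
      (hL.eventually_gt_atTop 0) ((hlogT.add (hT.const_mul_left γ)).congr' ?_ EventuallyEq.rfl)
    filter_upwards [hT0] with n hn
    simp [log_mul hn.ne' (exp_pos _).ne']
  have hg : (fun n => 3 * γ * T n + 2 * log (T n) + 2 * (log μ + 1 - log 2)) =o[l]
      fun n => log (L n) :=
    ((hT.const_mul_left (3 * γ)).add (hlogT.const_mul_left 2)).add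
      (isLittleO_const_log_atTop.comp_tendsto hL)
  refine ((((hLf.add (hT.trans ((isLittleO_log_id_atTop.comp_tendsto hL).trans hLf))).add
    ((hexp.const_mul_left μ).trans hLf)).add ?_).sub ?_).sub ?_
  · exact (hg.mul_isBigO hW.isBigO).congr' EventuallyEq.rfl hℓa
  · exact ((isLittleO_log_const_mul hWtop two_pos).trans_isBigO hW.isBigO).trans haf
  · exact (((isLittleO_log_const_mul hWtop (by positivity)).const_mul_left (1 / 2)).trans_isBigO
      hW.isBigO).trans haf

theorem isEquivalent_stirling_exponent {W T : α → ℝ} {μ : ℝ} (γ : ℝ) (hμ : μ ≠ 0)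
    (hL : Tendsto L l atTop) (hw : Tendsto w l atTop) (hwℓ : w =o[l] fun n => log (L n))
    (hW : W ~[l] fun n => w n * L n / log (L n)) (hT0 : ∀ᶠ n in l, 0 < T n)
    (hT : T =o[l] fun n => log (L n)) (hlogT : (fun n => log (T n)) =o[l] fun n => log (L n)) :
    (fun n => L n + T n * (γ * W n + 1 + μ * exp (γ * T n)) +
        2 * W n * (log (T n * μ * exp (γ * T n)) + 1) -
        (2 * W n + 1) * log (2 * W n) - (1 / 2) * log (4 * π * W n))
      ~[l] fun n => -2 * w n * L n := by
  have hmain : (fun n => -2 * (W n * log (W n))) ~[l] fun n => -2 * (w n * L n) :=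
    IsEquivalent.refl.mul (hW.mul_log_self hL hw hwℓ)
  have hR := (isLittleO_stirling_remainder γ μ hL hw hW hT0 hT hlogT).trans_isBigO
    (isBigO_self_const_mul (by norm_num : (-2 : ℝ) ≠ 0) _ l)
  refine ((hmain.add_isLittleO hR).congr_left ?_).congr_right (.of_forall fun n => by ring)
  have hW0 : ∀ᶠ n in l, 0 < W n :=
    (hW.symm.tendsto_atTop (tendsto_mul_div_log_atTop hL hw)).eventually_gt_atTop 0
  filter_upwards [hT0, hW0] with n hTn hWn
  simp only [Pi.add_apply]
  rw [log_mul (mul_ne_zero hTn.ne' hμ) (exp_pos _).ne', log_mul hTn.ne' hμ, log_exp,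
    log_mul two_ne_zero hWn.ne']
  ring

end

theorem stirling_exponent_asymptotics_general
    (μ γ : ℝ) (hμ : 0 < μ)
    (w : ℕ → ℝ)
    (hwtop : Tendsto w atTop atTop)
    (hwsmall : Tendsto (fun N : ℕ => w N / Real.log (Real.log N)) atTop (nhds 0)) :
    let 𝒲 : ℕ → ℝ := fun N => (⌊w N * Real.log N / Real.log (Real.log N)⌋ : ℤ)
    let 𝒯 : ℕ → ℝ := fun N => Real.log (Real.log N) / Real.sqrt (w N)
    let x : ℕ → ℝ := fun N =>
      Real.log N + 𝒯 N * (γ * 𝒲 N + 1 + μ * exp (γ * 𝒯 N)) +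
        2 * 𝒲 N * (Real.log (𝒯 N * μ * exp (γ * 𝒯 N)) + 1) -
        (2 * 𝒲 N + 1) * Real.log (2 * 𝒲 N) -
        (1 / 2) * Real.log (4 * Real.pi * 𝒲 N)
    Tendsto x atTop atBot ∧
      x ~[atTop] (fun N => -2 * w N * Real.log N) := by
  intro 𝒲 𝒯 x
  have hL : Tendsto (fun N : ℕ => log N) atTop atTop :=
    tendsto_log_atTop.comp tendsto_natCast_atTop_atTop
  have hℓ : Tendsto (fun N : ℕ => log (log N)) atTop atTop := tendsto_log_atTop.comp hL
  have hwℓ : w =o[atTop] fun N : ℕ => log (log N) :=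
    isLittleO_of_tendsto' ((hℓ.eventually_ne_atTop 0).mono fun _ hN h => absurd h hN) hwsmall
  have hx : x ~[atTop] fun N => -2 * w N * log N :=
    isEquivalent_stirling_exponent (W := 𝒲) (T := 𝒯) γ hμ.ne' hL hwtop hwℓ
      (isEquivalent_int_floor.comp_tendsto (tendsto_mul_div_log_atTop hL hwtop))
      ((hℓ.eventually_gt_atTop 0).and (hwtop.eventually_gt_atTop 0) |>.mono
        fun _ h => div_pos h.1 (sqrt_pos.2 h.2))
      (isLittleO_div_sqrt_self hwtop) (isLittleO_log_div_sqrt hL hwtop hwℓ)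
  refine ⟨hx.symm.tendsto_atBot ?_, hx⟩
  exact ((hwtop.atTop_mul_atTop₀ hL).const_mul_atTop_of_neg (by norm_num)).congr
    fun N => (mul_assoc _ _ _).symm

/-- With `𝒲 = ⌊w(N) log N / log log N⌋` and `𝒯 = w(N)^{-1/2} log log N`,
where `w` is positive, increasing, `w(N) → ∞` and `w(N)/log log N → 0`, the
quantity
`x_N = log N + 𝒯(γ𝒲 + 1 + μ e^{γ𝒯}) + 2𝒲(log(𝒯 μ e^{γ𝒯}) + 1)
       - (2𝒲+1) log(2𝒲) - (1/2) log(4π𝒲)`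
tends to `-∞`; in fact `x_N ∼ -2 w(N) log N`. -/
theorem stirling_exponent_asymptotics
    (μ γ : ℝ) (hμ : 0 < μ) (hγ : 0 < γ)
    (w : ℕ → ℝ) (hwpos : ∀ N, 0 < w N) (hwmono : Monotone w)
    (hwtop : Tendsto w atTop atTop)
    (hwsmall : Tendsto (fun N : ℕ => w N / Real.log (Real.log N)) atTop (nhds 0)) :
    let 𝒲 : ℕ → ℝ := fun N => (⌊w N * Real.log N / Real.log (Real.log N)⌋ : ℤ)
    let 𝒯 : ℕ → ℝ := fun N => Real.log (Real.log N) / Real.sqrt (w N)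
    let x : ℕ → ℝ := fun N =>
      Real.log N + 𝒯 N * (γ * 𝒲 N + 1 + μ * exp (γ * 𝒯 N)) +
        2 * 𝒲 N * (Real.log (𝒯 N * μ * exp (γ * 𝒯 N)) + 1) -
        (2 * 𝒲 N + 1) * Real.log (2 * 𝒲 N) -
        (1 / 2) * Real.log (4 * Real.pi * 𝒲 N)
    Tendsto x atTop atBot ∧
      x ~[atTop] (fun N => -2 * w N * Real.log N) :=
  stirling_exponent_asymptotics_general μ γ hμ w hwtop hwsmall
end

section
/- Let $\mu > 0$, $\gamma > 0$, $t \geq 0$, $W_0 \geq 0$, $N \geq 1$, and let $l \geq 1$ be an integer. Then $\sum_{i=0}^{\infty} \min\left( \frac{N(t\mu)^l e^{(\gamma(W_0+i+l)+1)t}}{l!}, \frac{N(t\mu)^i e^t}{i!} \right) \leq \frac{2N(t\mu)^l e^{(\gamma(W_0+2l)+\mu+1)t}}{(l-1)!}$. -/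
open Real Finset
open scoped Nat

/-! Split the series at `i = l`. For `i < l` each minimum is at most its first argument, which is at
most its value at the top exponent `γ (W₀ + 2l) + μ + 1`; these `l` terms give `l / l! ≤ 1 / (l-1)!`.
For `i ≥ l` each minimum is at most its second argument, and since `l! j! ≤ (l + j)!` the tail of
the exponential series obeys `∑_{i ≥ l} xⁱ / i! ≤ xˡ eˣ / l!`. -/

lemma tsum_pow_add_div_factorial_le {x : ℝ} (hx : 0 ≤ x) (l : ℕ) :
    ∑' j : ℕ, x ^ (j + l) / (j + l)! ≤ x ^ l / l ! * exp x := by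
  rw [exp_eq_exp_ℝ, NormedSpace.exp_eq_tsum_div, ← tsum_mul_left]
  refine Summable.tsum_le_tsum (fun j => ?_)
    ((summable_pow_div_factorial x).comp_injective (add_left_injective l))
    ((summable_pow_div_factorial x).mul_left _)
  have hfac : (l ! * j ! : ℝ) ≤ (j + l)! := by
    rw [add_comm j]
    exact_mod_cast Nat.le_of_dvd (Nat.factorial_pos _)
      (Nat.factorial_mul_factorial_dvd_factorial_add l j)
  rw [pow_add, div_mul_div_comm, mul_comm (x ^ j)]
  gcongr

lemma tsum_min_le_of_split {a b : ℕ → ℝ} (ha : ∀ i, 0 ≤ a i) (hb : ∀ i, 0 ≤ b i)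
    (hb_sum : Summable b) (l : ℕ) {A : ℝ} (hA : ∀ i < l, a i ≤ A) :
    ∑' i, min (a i) (b i) ≤ l * A + ∑' j, b (j + l) := by
  have hmin : Summable fun i => min (a i) (b i) :=
    hb_sum.of_nonneg_of_le (fun i => le_min (ha i) (hb i)) fun i => min_le_right _ _
  rw [← hmin.sum_add_tsum_nat_add l]
  gcongr
  · simpa using sum_le_card_nsmul (range l) _ A fun i hi =>
      (min_le_left _ _).trans (hA i (mem_range.1 hi))
  · exact hmin.comp_injective (add_left_injective l)
  · exact hb_sum.comp_injective (add_left_injective l)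
  · exact min_le_right _ _

lemma natCast_mul_div_factorial_le {x : ℝ} (hx : 0 ≤ x) (n : ℕ) :
    n * (x / n !) ≤ x / (n - 1)! := by
  cases n with
  | zero => simpa using hx
  | succ n =>
    rw [Nat.add_sub_cancel, Nat.factorial_succ, Nat.cast_mul]
    exact le_of_eq (by field_simp)

theorem sum_min_branching_bound_general
    (μ γ t W₀ : ℝ) (hμ : 0 < μ) (hγ : 0 < γ) (ht : 0 ≤ t) (hW : 0 ≤ W₀)
    (N : ℕ) (l : ℕ) :
    (∑' i : ℕ,
        min (N * (t * μ) ^ l * exp ((γ * (W₀ + i + l) + 1) * t) /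
              (Nat.factorial l))
            (N * (t * μ) ^ i * exp t / (Nat.factorial i))) ≤
      2 * N * (t * μ) ^ l * exp ((γ * (W₀ + 2 * l) + μ + 1) * t) /
        (Nat.factorial (l - 1)) := by
  set E := exp ((γ * (W₀ + 2 * l) + μ + 1) * t)
  have hexp_le : ∀ i < l, exp ((γ * (W₀ + i + l) + 1) * t) ≤ E := fun i hi => by
    have : γ * i ≤ γ * l := by gcongr
    exact exp_le_exp.2 (by gcongr; linarith)
  have hb : Summable fun i : ℕ => N * (t * μ) ^ i * exp t / i ! :=
    ((summable_pow_div_factorial (t * μ)).mul_left (N * exp t)).congr fun i => by ring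
  refine (tsum_min_le_of_split (fun i => by positivity) (fun i => by positivity) hb l
    (A := N * (t * μ) ^ l * E / l !) fun i hi => by gcongr; exact hexp_le i hi).trans ?_
  have htail : ∑' j : ℕ, N * (t * μ) ^ (j + l) * exp t / (j + l)! ≤
      N * (t * μ) ^ l * E / (l - 1)! := by
    have hE : exp ((μ + 1) * t) ≤ E := exp_le_exp.2 (by gcongr; nlinarith [mul_nonneg hγ.le hW])
    calc ∑' j : ℕ, N * (t * μ) ^ (j + l) * exp t / (j + l)!
        = N * exp t * ∑' j : ℕ, (t * μ) ^ (j + l) / (j + l)! := by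
          rw [← tsum_mul_left]; exact tsum_congr fun j => by ring
      _ ≤ N * exp t * ((t * μ) ^ l / l ! * exp (t * μ)) := by
          gcongr; exact tsum_pow_add_div_factorial_le (by positivity) l
      _ = N * (t * μ) ^ l * exp ((μ + 1) * t) / l ! := by
          rw [show (μ + 1) * t = t + t * μ by ring, exp_add]; ring
      _ ≤ N * (t * μ) ^ l * E / (l - 1)! := by
          gcongr; exact Nat.sub_le l 1
  have hhead := natCast_mul_div_factorial_le (by positivity : 0 ≤ N * (t * μ) ^ l * E) l
  calc _ ≤ N * (t * μ) ^ l * E / (l - 1)! + N * (t * μ) ^ l * E / (l - 1)! :=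
        add_le_add hhead htail
    _ = _ := by ring

/-- The summed minimum bound used in Proposition 3.2:
`∑_{i≥0} min( N(tμ)^l e^{(γ(W₀+i+l)+1)t}/l! , N(tμ)^i e^t/i! )
  ≤ 2N(tμ)^l e^{(γ(W₀+2l)+μ+1)t}/(l-1)!`. -/
theorem sum_min_branching_bound
    (μ γ t W₀ : ℝ) (hμ : 0 < μ) (hγ : 0 < γ) (ht : 0 ≤ t) (hW : 0 ≤ W₀)
    (N : ℕ) (hN : 1 ≤ N) (l : ℕ) (hl : 1 ≤ l) :
    (∑' i : ℕ,
        min (N * (t * μ) ^ l * exp ((γ * (W₀ + i + l) + 1) * t) /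
              (Nat.factorial l))
            (N * (t * μ) ^ i * exp t / (Nat.factorial i))) ≤
      2 * N * (t * μ) ^ l * exp ((γ * (W₀ + 2 * l) + μ + 1) * t) /
        (Nat.factorial (l - 1)) :=
  sum_min_branching_bound_general μ γ t W₀ hμ hγ ht hW N l
end
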